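/- Let a ≥ 1, r ≥ 2 be integers and m ≥ 0 an integer. Then ∏_{j=2}^{r} [ (m + a(j−1)/2) / (a(j−1)/2) · (m + 1 + a(j−2)/2)_{a−1} / (1 + a(j−2)/2)_{a−1} ] = (1/C') · ∏_{j=2}^{r} [ Γ(m + aj/2)/Γ(m + a(j−2)/2) + Γ(m + 1 + aj/2)/Γ(m + 1 + a(j−2)/2) ], where C' = a^{r−1}(r−1)! ∏_{j=2}^{r} Γ(aj/2)/Γ(1 + a(j−2)/2) and (x)_k = x(x+1)⋯(x+k−1) is the Pochhammer symbol. -/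

import Mathlib

/-- Rising factorial (Pochhammer symbol) `(x)_k = x(x+1)⋯(x+k−1)`. -/
noncomputable def poch (x : ℝ) (k : ℕ) : ℝ := ∏ i ∈ Finset.range k, (x + i)

/-!
Each factor of the product is a ratio of Pochhammer symbols, which are ratios of Gamma values.
The point is that the sum of Gamma ratios in a factor of the right-hand side collapses to one
Pochhammer symbol: with `x = m + a(j-2)/2`, both `Γ(x+a)/Γ(x)` and `Γ(x+1+a)/Γ(x+1)` contain
the product `(x+1)⋯(x+a-1)`, and the two leftover linear factors `x` and `x+a` add up to
`2m + a(j-1)`, which cancels against the normalisation `C'`.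
-/

open Finset

lemma poch_pos {x : ℝ} (hx : 0 < x) (n : ℕ) : 0 < poch x n :=
  prod_pos fun _ _ => by positivity

lemma poch_succ (x : ℝ) (n : ℕ) : poch x (n + 1) = poch x n * (x + n) :=
  prod_range_succ _ _

lemma poch_succ' (x : ℝ) (n : ℕ) : poch x (n + 1) = x * poch (x + 1) n := by
  simp only [poch, prod_range_succ', Nat.cast_add, Nat.cast_one, Nat.cast_zero, add_zero,
    add_assoc, add_comm (1 : ℝ), mul_comm]

lemma Gamma_add_nat_div_Gamma {x : ℝ} (hx : 0 < x) (n : ℕ) :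
    Real.Gamma (x + n) / Real.Gamma x = poch x n := by
  induction n with
  | zero => simp [poch, (Real.Gamma_pos_of_pos hx).ne']
  | succ n ih =>
    rw [Nat.cast_succ, ← add_assoc, Real.Gamma_add_one (by positivity), poch_succ, ← ih]
    ring

/-- At `x = 0` both sides vanish, the left one because `Real.Gamma 0 = 0`. -/
lemma Gamma_add_succ_div_Gamma {x : ℝ} (hx : 0 ≤ x) (n : ℕ) :
    Real.Gamma (x + (n + 1)) / Real.Gamma x = x * poch (x + 1) n := by
  rcases hx.eq_or_lt with rfl | hx
  · simp
  · rw [← Nat.cast_succ, Gamma_add_nat_div_Gamma hx, poch_succ']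

lemma Gamma_ratio_add_Gamma_ratio {x : ℝ} (hx : 0 ≤ x) (n : ℕ) :
    Real.Gamma (x + (n + 1)) / Real.Gamma x +
        Real.Gamma (x + 1 + (n + 1)) / Real.Gamma (x + 1) =
      (2 * x + (n + 1)) * poch (x + 1) n := by
  rw [Gamma_add_succ_div_Gamma hx, ← Nat.cast_succ, Gamma_add_nat_div_Gamma (by positivity),
    poch_succ]
  push_cast
  ring

lemma single_row_factor_eq {m j : ℝ} (hm : 0 ≤ m) (hj : 2 ≤ j) {a : ℕ} (ha : 1 ≤ a) :
    (m + a * (j - 1) / 2) / (a * (j - 1) / 2) *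
        (poch (m + 1 + a * (j - 2) / 2) (a - 1) / poch (1 + a * (j - 2) / 2) (a - 1)) =
      (Real.Gamma (m + a * j / 2) / Real.Gamma (m + a * (j - 2) / 2) +
          Real.Gamma (m + 1 + a * j / 2) / Real.Gamma (m + 1 + a * (j - 2) / 2)) /
        (a * (j - 1) * (Real.Gamma (a * j / 2) / Real.Gamma (1 + a * (j - 2) / 2))) := by
  obtain ⟨n, rfl⟩ : ∃ n, a = n + 1 := ⟨a - 1, by omega⟩
  rw [Nat.add_sub_cancel]
  push_cast
  set X : ℝ := (n + 1) * (j - 2) / 2 with hX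
  have hden : Real.Gamma ((n + 1) * j / 2) / Real.Gamma (1 + X) = poch (1 + X) n := by
    rw [show (n + 1) * j / 2 = 1 + X + n by rw [hX]; ring]
    exact Gamma_add_nat_div_Gamma (by positivity) n
  have hsum : Real.Gamma (m + (n + 1) * j / 2) / Real.Gamma (m + X) +
        Real.Gamma (m + 1 + (n + 1) * j / 2) / Real.Gamma (m + 1 + X) =
      (2 * (m + X) + (n + 1)) * poch (m + 1 + X) n := by
    rw [show m + (n + 1) * j / 2 = m + X + (n + 1) by rw [hX]; ring,
      show m + 1 + (n + 1) * j / 2 = m + X + 1 + (n + 1) by rw [hX]; ring,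
      add_right_comm m 1 X]
    exact Gamma_ratio_add_Gamma_ratio (by positivity) n
  have hP : 0 < poch (1 + X) n := poch_pos (by positivity) n
  have hj1 : 0 < j - 1 := by linarith
  rw [hden, hsum]
  field_simp
  ring

lemma prod_Icc_two_cast_sub_one (r : ℕ) : ∏ j ∈ Icc 2 r, ((j : ℝ) - 1) = (r - 1).factorial := by
  rcases r with _ | r
  · simp
  · rw [← Ico_add_one_right_eq_Icc, ← prod_Ico_add' _ 1 (r + 1) 1, Nat.add_sub_cancel,
      ← prod_Ico_id_eq_factorial, Nat.cast_prod]
    simp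

theorem dim_single_row_eigenvalue_general (a r : ℕ) (ha : 1 ≤ a) (m : ℕ) :
    ∏ j ∈ Finset.Icc 2 r,
        (((m : ℝ) + a * ((j : ℝ) - 1) / 2) / ((a : ℝ) * ((j : ℝ) - 1) / 2) *
          (poch ((m : ℝ) + 1 + a * ((j : ℝ) - 2) / 2) (a - 1) /
            poch (1 + (a : ℝ) * ((j : ℝ) - 2) / 2) (a - 1))) =
      (1 / ((a : ℝ) ^ (r - 1) * (Nat.factorial (r - 1) : ℝ) *
          ∏ j ∈ Finset.Icc 2 r,
            (Real.Gamma (a * j / 2) / Real.Gamma (1 + a * ((j : ℝ) - 2) / 2)))) *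
        ∏ j ∈ Finset.Icc 2 r,
          (Real.Gamma (m + a * j / 2) / Real.Gamma (m + a * ((j : ℝ) - 2) / 2) +
            Real.Gamma (m + 1 + a * j / 2) / Real.Gamma (m + 1 + a * ((j : ℝ) - 2) / 2)) := by
  have hcard : #(Icc 2 r) = r - 1 := by rw [Nat.card_Icc]; omega
  have hC : (a : ℝ) ^ (r - 1) * (r - 1).factorial *
        ∏ j ∈ Icc 2 r, (Real.Gamma (a * j / 2) / Real.Gamma (1 + a * ((j : ℝ) - 2) / 2)) =
      ∏ j ∈ Icc 2 r,
        (a * ((j : ℝ) - 1) * (Real.Gamma (a * j / 2) / Real.Gamma (1 + a * ((j : ℝ) - 2) / 2))) := by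
    rw [prod_mul_distrib, prod_mul_distrib, prod_const, hcard, prod_Icc_two_cast_sub_one]
  rw [hC, one_div, ← prod_inv_distrib, ← prod_mul_distrib]
  refine prod_congr rfl fun j hj => ?_
  have hj2 : (2 : ℝ) ≤ j := by exact_mod_cast (mem_Icc.mp hj).1
  rw [single_row_factor_eq m.cast_nonneg hj2 ha, inv_mul_eq_div]

/-- The dimension `d'_{(m)}` of the degree-`m` Peter-Weyl space as an eigenvalue:
`∏_{j=2}^r [(m+a(j−1)/2)/(a(j−1)/2) · (m+1+a(j−2)/2)_{a−1}/(1+a(j−2)/2)_{a−1}]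
  = (1/C') ∏_{j=2}^r [Γ(m+aj/2)/Γ(m+a(j−2)/2) + Γ(m+1+aj/2)/Γ(m+1+a(j−2)/2)]`. -/
theorem dim_single_row_eigenvalue (a r : ℕ) (ha : 1 ≤ a) (hr : 2 ≤ r) (m : ℕ) :
    ∏ j ∈ Finset.Icc 2 r,
        (((m : ℝ) + a * ((j : ℝ) - 1) / 2) / ((a : ℝ) * ((j : ℝ) - 1) / 2) *
          (poch ((m : ℝ) + 1 + a * ((j : ℝ) - 2) / 2) (a - 1) /
            poch (1 + (a : ℝ) * ((j : ℝ) - 2) / 2) (a - 1))) =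
      (1 / ((a : ℝ) ^ (r - 1) * (Nat.factorial (r - 1) : ℝ) *
          ∏ j ∈ Finset.Icc 2 r,
            (Real.Gamma (a * j / 2) / Real.Gamma (1 + a * ((j : ℝ) - 2) / 2)))) *
        ∏ j ∈ Finset.Icc 2 r,
          (Real.Gamma (m + a * j / 2) / Real.Gamma (m + a * ((j : ℝ) - 2) / 2) +
            Real.Gamma (m + 1 + a * j / 2) / Real.Gamma (m + 1 + a * ((j : ℝ) - 2) / 2)) :=
  dim_single_row_eigenvalue_general a r ha m
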